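/- Let u ∈ (F(Σ))^∧_n be a profinite tree, i.e. a natural family of functions u_C : Clone(F(Σ), C) → C_n over all locally finite clones C (natural with respect to clone morphisms between locally finite clones). Then for every locally finite clone C and every p ∈ Clone(F(Σ), C), there exists t ∈ Clone(F(y_n), F(Σ)) such that u_C(p) = p ∘ t (under the identification C_n ≅ Clone(F(y_n), C)); that is, each component value of u is definable. -/
import Mathlib


/-- An abstract clone: a family of sets `C n` with variables and substitution
satisfying the unit and associativity laws. -/
structure CloneStr (C : ℕ → Type) : Type where
  v : ∀ n, Fin n → C n
  s : ∀ m n, C m → (Fin m → C n) → C n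
  s_var : ∀ n (x : C n), s n n x (v n) = x
  var_s : ∀ m n (i : Fin m) (y : Fin m → C n), s m n (v m i) y = y i
  s_assoc : ∀ l m n (x : C l) (y : Fin l → C m) (z : Fin m → C n),
      s m n (s l m x y) z = s l n x (fun i => s m n (y i) z)

/-- A bundled abstract clone. -/
structure BClone : Type 1 where
  C : ℕ → Type
  str : CloneStr C

/-- A clone morphism: a family of functions preserving variables and substitution. -/
structure BCloneHom (A B : BClone) : Type where
  f : ∀ n, A.C n → B.C n
  map_v : ∀ n (i : Fin n), f n (A.str.v n i) = B.str.v n i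
  map_s : ∀ m n (x : A.C m) (y : Fin m → A.C n),
      f n (A.str.s m n x y) = B.str.s m n (f m x) (fun i => f n (y i))

/-- Composition of clone morphisms. -/
def BCloneHom.comp {A B C : BClone} (g : BCloneHom B C) (h : BCloneHom A B) :
    BCloneHom A C where
  f n x := g.f n (h.f n x)
  map_v n i := by show g.f n (h.f n _) = _; rw [h.map_v, g.map_v]
  map_s m n x y := by show g.f n (h.f n _) = _; rw [h.map_s, g.map_s]

/-- A clone is locally finite if each of its arity sets is finite. -/
def LocFin (A : BClone) : Prop := ∀ n, Finite (A.C n)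

/-- The image of a clone morphism, as a clone. -/
def ImClone {A B : BClone} (p : BCloneHom A B) : BClone where
  C m := { c : B.C m // ∃ t : A.C m, p.f m t = c }
  str :=
  { v := fun m i => ⟨B.str.v m i, A.str.v m i, p.map_v m i⟩
    s := fun m k x y => ⟨B.str.s m k x.1 (fun i => (y i).1), by
      obtain ⟨tx, htx⟩ := x.2
      choose ty hty using fun i => (y i).2
      exact ⟨A.str.s m k tx ty, by rw [p.map_s, htx]; simp [hty]⟩⟩
    s_var := fun m x => Subtype.ext (B.str.s_var m x.1)
    var_s := fun m k i y => Subtype.ext (B.str.var_s m k i fun j => (y j).1)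
    s_assoc := fun a b c x y z =>
      Subtype.ext (B.str.s_assoc a b c x.1 (fun i => (y i).1) (fun i => (z i).1)) }

def ImClone.proj {A B : BClone} (p : BCloneHom A B) : BCloneHom A (ImClone p) where
  f m t := ⟨p.f m t, t, rfl⟩
  map_v m i := Subtype.ext (p.map_v m i)
  map_s m k x y := Subtype.ext (p.map_s m k x y)

def ImClone.incl {A B : BClone} (p : BCloneHom A B) : BCloneHom (ImClone p) B where
  f m c := c.1
  map_v _ _ := rfl
  map_s _ _ _ _ := rfl

/-- pointwise definability of profinite trees.  Let `Fsig` be the free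
clone on a ranked alphabet `ns : Fin l → ℕ` (clone morphisms out of it correspond
naturally to tuples of elements at the arities `ns j`), and let `u` be a profinite tree
with `n` variables: a family `u_C : Clone(F(Σ), C) → C_n` over locally finite clones,
natural with respect to clone morphisms between locally finite clones.  Then for every
locally finite clone `C` and every `p ∈ Clone(F(Σ), C)` there exists
`t ∈ Clone(F(y_n), F(Σ)) ≅ F(Σ)_n` with `u_C(p) = p ∘ t`. -/

theorem profinite_tree_pointwise_definable (l : ℕ) (ns : Fin l → ℕ) (Fsig : BClone)
    (e : ∀ B : BClone, BCloneHom Fsig B ≃ (∀ j : Fin l, B.C (ns j)))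
    (hfree : ∀ (B B' : BClone) (φ : BCloneHom B B') (p : BCloneHom Fsig B),
      e B' (φ.comp p) = fun j => φ.f (ns j) (e B p j))
    (n : ℕ)
    (u : ∀ B : BClone, BCloneHom Fsig B → B.C n)
    (hnat : ∀ (B B' : BClone), LocFin B → LocFin B' →
      ∀ (φ : BCloneHom B B') (p : BCloneHom Fsig B),
        φ.f n (u B p) = u B' (φ.comp p)) :
    ∀ (C : BClone), LocFin C → ∀ p : BCloneHom Fsig C,
      ∃ t : Fsig.C n, u C p = p.f n t := by
  intro C hC p
  have hIm : LocFin (ImClone p) := fun m => by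
    have := hC m
    exact Subtype.finite
  have h := hnat (ImClone p) C hIm hC (ImClone.incl p) (ImClone.proj p)
  have hcomp : (ImClone.incl p).comp (ImClone.proj p) = p := by
    cases p; rfl
  rw [hcomp] at h
  obtain ⟨t, ht⟩ := (u (ImClone p) (ImClone.proj p)).2
  exact ⟨t, by rw [← h]; exact ht.symm⟩
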